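/- arXiv:2405.20143 — 5 statements merged into one kernel-verified Lean document; each statement's English description precedes it below -/
import Mathlib

section
/- Given three alternating spacetime games G, G', G'' and game morphisms γ₁ : G' → G with components (ν₁', β₁) and γ₂ : G'' → G' with components (ν₂'', β₂'), the composite pair γ₁ ∘ γ₂ := (ν₂'' ∘ ν₁', {β₁,x ∘ β₂',ν₁'(x)}_x) satisfies all five structural constraints of a game morphism, i.e. γ₁ ∘ γ₂ : G'' → G is a game morphism. -/
open scoped Classical

/-! # Preamble: spacetime games and causal contextuality scenarios

Formalization of the structures of G. Fourny,
"Spacetime games subsume causal contextuality scenarios". -/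

/-- The facets (maximal elements) of a family of sets. -/
def facetsOf {α : Type*} (A : Set (Set α)) : Set (Set α) :=
  {s | s ∈ A ∧ ∀ t ∈ A, s ⊆ t → s = t}

/-- The support of a partial function (set of events). -/
def osupp {X O : Type*} (t : X → Option O) : Set X :=
  {y | t y ≠ none}

/-- A set of events is *consistent* if it assigns at most one outcome
to each measurement. -/
def ConsistentEvents {X O : Type*} (S : Set (X × O)) : Prop :=
  ∀ (x : X) (o o' : O), (x, o) ∈ S → (x, o') ∈ S → o = o'

/-- The local cover restriction of a cover `cov` to a set `s`: the facets of the
restriction to `s` of the simplicial complex whose facets are `cov`. -/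
def localCover {α : Type*} (cov : Set (Set α)) (s : Set α) : Set (Set α) :=
  facetsOf {c | ∃ C ∈ cov, c = C ∩ s ∧ c ≠ ∅}

/-- Raw data of a causal contextuality scenario with a cover:
measurements `X`, outcomes `O x ⊆ Outcome` for each measurement `x`,
an enabling relation `Enables` between sets of events (partial functions
from measurements to outcomes) and measurements, and a cover `Cover`
(the facets of a simplicial complex on `X`). -/
structure ScenarioData where
  X : Type*
  Outcome : Type*
  O : X → Set Outcome
  Enables : (X → Option Outcome) → X → Prop
  Cover : Set (Set X)

namespace ScenarioData

variable (Γ : ScenarioData)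

/-- The set of measurements enabled by an event set `t`. -/
def enabled (t : Γ.X → Option Γ.Outcome) : Set Γ.X :=
  {x | Γ.Enables t x}

/-- Causal precedence: `a` precedes `b` if `a` is in the support of an
event set enabling `b`. -/
def prec (a b : Γ.X) : Prop :=
  ∃ t, Γ.Enables t b ∧ t a ≠ none

/-- The causal bridge `τ(x)`: the unique event set enabling `x`
(junk value if none exists). -/
noncomputable def tau (x : Γ.X) : Γ.X → Option Γ.Outcome :=
  if h : ∃ t, Γ.Enables t x then h.choose else fun _ => none

/-- `τ̄(x)`: the transitive closure of the enabling conditions of `x`, i.e. the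
set of all past events that must happen to enable measuring `x`. -/
noncomputable def tauBar (x : Γ.X) : Set (Γ.X × Γ.Outcome) :=
  {p | ∃ y, Relation.ReflTransGen Γ.prec y x ∧ Γ.tau y p.1 = some p.2}

end ScenarioData

/-- A causal contextuality scenario with no cycles, unique causal bridges,
a causally secured cover, consistent enabling event sets, and no unused
measurements. These are the objects of the category `Scenario`. -/
structure IsCCS (Γ : ScenarioData) : Prop where
  /-- Left-hand sides of enabling relations assign admissible outcomes. -/
  event_lhs : ∀ t x, Γ.Enables t x → ∀ y o, t y = some o → o ∈ Γ.O y
  /-- Unique causal bridges: each measurement has exactly one enabling event set. -/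
  unique_bridges : ∀ x, ∃! t, Γ.Enables t x
  /-- No cycles in the causal precedence relation. -/
  acyclic : ∀ x, ¬ Relation.TransGen Γ.prec x x
  /-- The cover is the set of facets of a simplicial complex (an antichain). -/
  cover_antichain : ∀ C ∈ Γ.Cover, ∀ D ∈ Γ.Cover, C ⊆ D → C = D
  /-- Every measurement appears in some facet (no unused measurements). -/
  cover_covers : ∀ x, ∃ C ∈ Γ.Cover, x ∈ C
  /-- The transitive enabling conditions of each measurement are consistent. -/
  no_unused : ∀ x, ConsistentEvents (Γ.tauBar x)
  /-- Causally secured (i): facet membership propagates to enabling measurements. -/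
  secured_support : ∀ C ∈ Γ.Cover, ∀ x ∈ C, osupp (Γ.tau x) ⊆ C
  /-- Causally secured (ii): measurements with inconsistent enabling conditions
  never share a facet. -/
  secured_inconsistent : ∀ x y, ¬ ConsistentEvents (Γ.tauBar x ∪ Γ.tauBar y) →
    ∀ C ∈ Γ.Cover, ¬ (x ∈ C ∧ y ∈ C)
  /-- Causally secured (iii): the cover is maximal among covers with the same
  local cover restrictions satisfying (i) and (ii). -/
  secured_max : ∀ cov' : Set (Set Γ.X),
    (∀ C ∈ cov', ∀ D ∈ cov', C ⊆ D → C = D) →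
    (∀ C ∈ cov', ∀ x ∈ C, osupp (Γ.tau x) ⊆ C) →
    (∀ x y, ¬ ConsistentEvents (Γ.tauBar x ∪ Γ.tauBar y) →
      ∀ C ∈ cov', ¬ (x ∈ C ∧ y ∈ C)) →
    (∀ t x, Γ.Enables t x →
      localCover cov' (Γ.enabled t) = localCover Γ.Cover (Γ.enabled t)) →
    ∀ C ∈ cov', ∃ D ∈ Γ.Cover, C ⊆ D

/-- A scenario morphism `μ : Γ' → Γ` with components `π : Γ.X → Γ'.X`
(entailing a simplicial map from the cover of `Γ` to that of `Γ'`) and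
outcome translations `α x : O'_{π x} → O_x`, subject to the three
structural constraints. -/
structure IsScenarioHom (Γ' Γ : ScenarioData) (π : Γ.X → Γ'.X)
    (α : Γ.X → Γ'.Outcome → Γ.Outcome) : Prop where
  /-- `α x` maps the outcomes of `π x` to outcomes of `x`. -/
  alpha_mapsTo : ∀ x : Γ.X, ∀ o ∈ Γ'.O (π x), α x o ∈ Γ.O x
  /-- `π` entails a simplicial map from the cover of `Γ` to the cover of `Γ'`. -/
  simplicial : ∀ C ∈ Γ.Cover, ∃ C' ∈ Γ'.Cover, π '' C ⊆ C'
  /-- (1) `π` preserves causal bridges. -/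
  bridge_pres : ∀ x y : Γ.X, Γ'.tau (π x) = Γ'.tau (π y) → Γ.tau x = Γ.tau y
  /-- (2) measurement enablement is not precluded by `π`. -/
  support_surj : ∀ (x : Γ.X) (y' : Γ'.X), Γ'.tau (π x) y' ≠ none → ∃ y, π y = y'
  /-- (3) outcomes on causal bridges are mapped consistently. -/
  outcome_consistent : ∀ (x y : Γ.X) (o' : Γ'.Outcome),
    Γ'.tau (π x) (π y) = some o' → Γ.tau x y = some (α y o')

/-- Identity component `π` of the identity scenario morphism. -/
def idπ (Γ : ScenarioData) : Γ.X → Γ.X := id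

/-- Identity component `α` of the identity scenario morphism. -/
def idα (Γ : ScenarioData) : Γ.X → Γ.Outcome → Γ.Outcome := fun _ o => o

/-- The `π` component of the composition `μ₁ ∘ μ₂` of scenario morphisms
`μ₁ : Γ' → Γ` and `μ₂ : Γ'' → Γ'`. -/
def compπ {Γ Γ' Γ'' : ScenarioData} (π₁ : Γ.X → Γ'.X) (π₂ : Γ'.X → Γ''.X) :
    Γ.X → Γ''.X :=
  fun x => π₂ (π₁ x)

/-- The `α` component of the composition `μ₁ ∘ μ₂` of scenario morphisms. -/
def compα {Γ Γ' Γ'' : ScenarioData} (π₁ : Γ.X → Γ'.X)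
    (α₁ : Γ.X → Γ'.Outcome → Γ.Outcome) (α₂ : Γ'.X → Γ''.Outcome → Γ'.Outcome) :
    Γ.X → Γ''.Outcome → Γ.Outcome :=
  fun x o => α₁ x (α₂ (π₁ x) o)

/-- Two scenarios are isomorphic if there are mutually inverse scenario
morphisms between them. -/
def ScenIso (A B : ScenarioData) : Prop :=
  ∃ (π : B.X → A.X) (α : B.X → A.Outcome → B.Outcome)
    (π₂ : A.X → B.X) (α₂ : A.X → B.Outcome → A.Outcome),
    IsScenarioHom A B π α ∧ IsScenarioHom B A π₂ α₂ ∧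
    (∀ x, π (π₂ x) = x) ∧ (∀ y, π₂ (π y) = y) ∧
    (∀ x o, α₂ x (α (π₂ x) o) = o) ∧ (∀ y o, α y (α₂ (π y) o) = o)

/-- A spacetime game: a directed acyclic graph of decision nodes, labelled with
players and actions, with an information-set partition (represented by the
quotient map `ι` onto the type `Info` of information sets), and two
distinguished players Bob (the observer) and Alfred (nature).
The set of outcomes `Z` is the set of complete histories. -/
structure SpacetimeGame where
  Node : Type*
  Info : Type*
  Player : Type*
  Action : Type*
  /-- the information set of a node -/
  ι : Node → Info
  /-- the player of an information set -/
  ρ : Info → Player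
  /-- the available actions of an information set -/
  χ : Info → Set Action
  /-- the edge relation `R` -/
  edge : Node → Node → Prop
  /-- the action labelling the edge `(n, m)` -/
  σ : Node → Node → Action
  bob : Player
  alfred : Player

namespace SpacetimeGame

variable (G : SpacetimeGame)

/-- A node is played by Bob. -/
def isBob (n : G.Node) : Prop := G.ρ (G.ι n) = G.bob

/-- A node is played by Alfred. -/
def isAlfred (n : G.Node) : Prop := G.ρ (G.ι n) = G.alfred

/-- The nodes played by Alfred. -/
def NodeA := {n : G.Node // G.isAlfred n}

/-- The (nonempty) information sets played by Alfred. -/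
def InfoA := {i : G.Info // ∃ n, G.ι n = i ∧ G.ρ i = G.alfred}

/-- The parent of a node (junk value at roots; unique parent for
Alfred nodes in alternating games by BA1). -/
noncomputable def parent (n : G.Node) : G.Node :=
  if h : ∃ t, G.edge t n then h.choose else n

/-- A representative node of an Alfred information set. -/
noncomputable def repA (x : G.InfoA) : G.NodeA :=
  ⟨x.2.choose, show G.ρ (G.ι x.2.choose) = G.alfred by
    rw [x.2.choose_spec.1]; exact x.2.choose_spec.2⟩

/-- The causal bridge `t̂` of a node `t`: the set of events consisting of the
predecessors' information sets together with the labels on the incoming edges. -/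
noncomputable def tHat (t : G.Node) : G.InfoA → Option G.Action :=
  fun y => if h : ∃ m, G.ι m = y.1 ∧ G.edge m t then some (G.σ h.choose t) else none

/-- A complete history: a partial assignment of actions to information sets
such that an information set is assigned an action exactly when it is
activated, and assigned actions are available. -/
def CompleteHistory (z : G.Info → Option G.Action) : Prop :=
  (∀ i a, z i = some a → a ∈ G.χ i) ∧
  ∀ i, (z i ≠ none ↔ ∃ n, G.ι n = i ∧ ∀ m, G.edge m n → z (G.ι m) = some (G.σ m n))

/-- The set of outcomes `Z` of a (valid) game: the set of complete histories. -/
def Z : Set (G.Info → Option G.Action) := {z | G.CompleteHistory z}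

/-- The natural cover of a game: the facets of the projections to Alfred's
information sets of the supports of the complete histories. -/
def naturalCover : Set (Set G.InfoA) :=
  facetsOf {S | ∃ z, G.CompleteHistory z ∧ S = {x : G.InfoA | z x.1 ≠ none}}

end SpacetimeGame

/-- An alternating spacetime game: a valid spacetime game (with no unused
information sets and no unused actions) on two players Bob and Alfred
satisfying BIPARTITE, EVEN, BOB-S, BOB-A, BA1, BA2, AB1 and AB2.
These are the objects of the category `Game`. -/
structure IsAlternating (G : SpacetimeGame) : Prop where
  /-- 2-PLAYERS: the two players are distinct -/
  players_ne : G.bob ≠ G.alfred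
  /-- 2-PLAYERS: every information set is played by Bob or by Alfred -/
  two_players : ∀ i : G.Info, G.ρ i = G.bob ∨ G.ρ i = G.alfred
  /-- the graph of decision nodes is finite -/
  node_finite : Finite G.Node
  /-- the graph of decision nodes is acyclic -/
  acyclic : ∀ n : G.Node, ¬ Relation.TransGen G.edge n n
  /-- edge labels are available actions: `σ(n,m) ∈ χ(n)` -/
  sigma_mem : ∀ n m : G.Node, G.edge n m → G.σ n m ∈ G.χ (G.ι n)
  /-- no never-activated information set -/
  no_unused_info : ∀ i : G.Info, ∃ z, G.CompleteHistory z ∧ z i ≠ none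
  /-- no unused action -/
  no_unused_action : ∀ a : G.Action, ∃ i, a ∈ G.χ i
  /-- BIPARTITE -/
  bipartite : ∀ n m : G.Node, G.edge n m → G.ρ (G.ι n) ≠ G.ρ (G.ι m)
  /-- EVEN: all root nodes are played by Bob -/
  even_roots : ∀ n : G.Node, (∀ m, ¬ G.edge m n) → G.isBob n
  /-- EVEN: all leaf nodes are played by Alfred -/
  even_leaves : ∀ n : G.Node, (∀ m, ¬ G.edge n m) → G.isAlfred n
  /-- BOB-S: Bob's information sets are singletons -/
  bob_singleton : ∀ n m : G.Node, G.isBob n → G.ι n = G.ι m → n = m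
  /-- BOB-A: at any Bob node, every available action is used on some edge -/
  bob_actions : ∀ t : G.Node, G.isBob t → ∀ a ∈ G.χ (G.ι t), ∃ n, G.edge t n ∧ G.σ t n = a
  /-- BA1: every Alfred node has exactly one parent -/
  ba1 : ∀ n : G.Node, G.isAlfred n → ∃! t, G.edge t n
  /-- BA2: children of a Bob node reached with the same label lie in
  different information sets -/
  ba2 : ∀ t n m : G.Node, G.isBob t → G.edge t n → G.edge t m →
    G.σ t n = G.σ t m → G.ι n = G.ι m → n = m
  /-- AB1: nodes in the same Alfred information set have the same successors
  with the same labels -/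
  ab1 : ∀ n m : G.Node, G.isAlfred n → G.ι n = G.ι m →
    ∀ u, (G.edge n u ↔ G.edge m u) ∧ (G.edge n u → G.σ n u = G.σ m u)
  /-- AB2: no two distinct Bob nodes have the same causal bridge -/
  ab2 : ∀ t u : G.Node, G.isBob t → G.isBob u → (∀ n, G.edge n t ↔ G.edge n u) →
    (∀ n, G.edge n t → G.σ n t = G.σ n u) → t = u

/-- A game morphism `γ : G' → G` with components `ν : N_A → N'_A` on
Alfred's nodes and action translations `β` (indexed by Alfred's information
sets via constancy on them), subject to the five structural constraints. -/
structure IsGameHom (G' G : SpacetimeGame) (ν : G.NodeA → G'.NodeA)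
    (β : G.NodeA → G'.Action → G.Action) : Prop where
  /-- `β` is indexed by Alfred's information sets. -/
  beta_const : ∀ n m : G.NodeA, G.ι n.1 = G.ι m.1 → β n = β m
  /-- `β_x` maps `χ'(ν'(x))` into `χ(x)`. -/
  beta_mapsTo : ∀ n : G.NodeA, ∀ a ∈ G'.χ (G'.ι (ν n).1), β n a ∈ G.χ (G.ι n.1)
  /-- (1) `ν` preserves information sets. -/
  info_pres : ∀ n m : G.NodeA, G.ι n.1 = G.ι m.1 → G'.ι (ν n).1 = G'.ι (ν m).1
  /-- (2) `ν` preserves parents. -/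
  parent_pres : ∀ n m : G.NodeA,
    G'.parent (ν n).1 = G'.parent (ν m).1 → G.parent n.1 = G.parent m.1
  /-- (3) universe labels (measurement outcomes) are mapped consistently. -/
  outcome_consistent : ∀ n m : G.NodeA, G'.edge (ν n).1 (G'.parent (ν m).1) →
    G.edge n.1 (G.parent m.1) ∧
      β n (G'.σ (ν n).1 (G'.parent (ν m).1)) = G.σ n.1 (G.parent m.1)
  /-- (4) `ν` restricts to a simplicial map on the local contexts at each
  node of `D_ν`, mapping individual nodes consistently. -/
  simplicial : ∀ m n : G.NodeA, G.edge (G.parent m.1) n.1 →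
    G'.edge (G'.parent (ν m).1) (ν n).1 ∧
      ∀ k : G.NodeA, G.edge (G.parent m.1) k.1 →
        G.σ (G.parent m.1) n.1 = G.σ (G.parent m.1) k.1 →
        G'.σ (G'.parent (ν m).1) (ν n).1 = G'.σ (G'.parent (ν m).1) (ν k).1
  /-- (5) all Alfred information sets feeding a node of `D_ν` are in the
  image of `ν`. -/
  alfred_surj : ∀ (n' : G'.NodeA) (m : G.NodeA), G'.edge n'.1 (G'.parent (ν m).1) →
    ∃ k : G.NodeA, G'.ι (ν k).1 = G'.ι n'.1

/-- Identity component `ν` of the identity game morphism. -/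
def idν (G : SpacetimeGame) : G.NodeA → G.NodeA := id

/-- Identity component `β` of the identity game morphism. -/
def idβ (G : SpacetimeGame) : G.NodeA → G.Action → G.Action := fun _ a => a

/-- The `ν` component of the composition `γ₁ ∘ γ₂` of game morphisms
`γ₁ : G' → G` and `γ₂ : G'' → G'`. -/
def compν {G G' G'' : SpacetimeGame} (ν₁ : G.NodeA → G'.NodeA)
    (ν₂ : G'.NodeA → G''.NodeA) : G.NodeA → G''.NodeA :=
  fun n => ν₂ (ν₁ n)

/-- The `β` component of the composition `γ₁ ∘ γ₂` of game morphisms. -/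
def compβ {G G' G'' : SpacetimeGame} (ν₁ : G.NodeA → G'.NodeA)
    (β₁ : G.NodeA → G'.Action → G.Action) (β₂ : G'.NodeA → G''.Action → G'.Action) :
    G.NodeA → G''.Action → G.Action :=
  fun n a => β₁ n (β₂ (ν₁ n) a)

/-- The scenario associated with a spacetime game (the action of the
functor `F` on objects): measurements are Alfred's information sets,
outcomes their available actions, each measurement is enabled by the causal
bridges of the parents of its nodes, and the cover is the natural cover. -/
noncomputable def Fobj (G : SpacetimeGame) : ScenarioData where
  X := G.InfoA
  Outcome := G.Action
  O := fun x => G.χ x.1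
  Enables := fun t x => ∃ n, G.ι n = x.1 ∧
    ((∃ t₀, G.edge t₀ n ∧ t = G.tHat t₀) ∨ ((∀ m, ¬ G.edge m n) ∧ t = fun _ => none))
  Cover := G.naturalCover

/-- The `π` component of the action of the functor `F` on a game morphism
with node component `ν`: `ν` viewed as acting on Alfred's information sets. -/
noncomputable def Fhomπ {G G' : SpacetimeGame} (ν : G.NodeA → G'.NodeA) :
    G.InfoA → G'.InfoA :=
  fun x => ⟨G'.ι (ν (G.repA x)).1, ⟨(ν (G.repA x)).1, rfl, (ν (G.repA x)).2⟩⟩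

/-- The `α` component of the action of the functor `F` on a game morphism
with action component `β`: `β` viewed as indexed by Alfred's information sets. -/
noncomputable def Fhomα {G G' : SpacetimeGame} (β : G.NodeA → G'.Action → G.Action) :
    G.InfoA → G'.Action → G.Action :=
  fun x => β (G.repA x)

/-- The spacetime game associated with a scenario: Bob's nodes are the
left-hand sides of enabling relations, Alfred's nodes are triples
(enabling event set, measurement, context), Bob's actions are the local
contexts, Alfred's actions are the outcomes. -/
def Gobj (Γ : ScenarioData) : SpacetimeGame where
  Node := ({t : Γ.X → Option Γ.Outcome // ∃ x, Γ.Enables t x}) ⊕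
    ({p : (Γ.X → Option Γ.Outcome) × Γ.X × Set Γ.X //
        Γ.Enables p.1 p.2.1 ∧ p.2.2 ∈ localCover Γ.Cover (Γ.enabled p.1) ∧ p.2.1 ∈ p.2.2})
  Info := ({t : Γ.X → Option Γ.Outcome // ∃ x, Γ.Enables t x}) ⊕ Γ.X
  Player := Bool
  Action := Set Γ.X ⊕ Γ.Outcome
  ι := fun n => match n with
    | Sum.inl t => Sum.inl t
    | Sum.inr p => Sum.inr p.1.2.1
  ρ := fun i => match i with
    | Sum.inl _ => true
    | Sum.inr _ => false
  χ := fun i => match i with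
    | Sum.inl t => Sum.inl '' localCover Γ.Cover (Γ.enabled t.1)
    | Sum.inr x => Sum.inr '' Γ.O x
  edge := fun n m => match n, m with
    | Sum.inl t, Sum.inr p => p.1.1 = t.1
    | Sum.inr p, Sum.inl t => t.1 p.1.2.1 ≠ none
    | _, _ => False
  σ := fun n m => match n, m with
    | Sum.inl _, Sum.inr p => Sum.inl p.1.2.2
    | Sum.inr p, Sum.inl t =>
      match t.1 p.1.2.1 with
      | some o => Sum.inr o
      | none => Sum.inl (∅ : Set Γ.X)
    | _, _ => Sum.inl (∅ : Set Γ.X)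
  bob := true
  alfred := false

/-- The composite of two game morphisms between alternating
spacetime games satisfies all five structural constraints of a game morphism. -/
theorem comp_is_game_morphism (G G' G'' : SpacetimeGame)
    (hG : IsAlternating G) (hG' : IsAlternating G') (hG'' : IsAlternating G'')
    (ν₁ : G.NodeA → G'.NodeA) (β₁ : G.NodeA → G'.Action → G.Action)
    (ν₂ : G'.NodeA → G''.NodeA) (β₂ : G'.NodeA → G''.Action → G'.Action)
    (h₁ : IsGameHom G' G ν₁ β₁) (h₂ : IsGameHom G'' G' ν₂ β₂) :
    IsGameHom G'' G (compν ν₁ ν₂) (compβ ν₁ β₁ β₂) := by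
  constructor
  · intro n m h
    have e1 := h₁.beta_const n m h
    have e2 := h₂.beta_const (ν₁ n) (ν₁ m) (h₁.info_pres n m h)
    funext a
    simp [compβ, e1, e2]
  · intro n a ha
    exact h₁.beta_mapsTo n _ (h₂.beta_mapsTo (ν₁ n) a ha)
  · intro n m h
    exact h₂.info_pres _ _ (h₁.info_pres n m h)
  · intro n m h
    exact h₁.parent_pres n m (h₂.parent_pres _ _ h)
  · intro n m h
    obtain ⟨e', hb⟩ := h₂.outcome_consistent (ν₁ n) (ν₁ m) h
    obtain ⟨e, hb'⟩ := h₁.outcome_consistent n m e'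
    exact ⟨e, by simp [compβ, compν, hb, hb'] ⟩
  · intro m n h
    obtain ⟨e', hσ'⟩ := h₁.simplicial m n h
    obtain ⟨e'', hσ''⟩ := h₂.simplicial (ν₁ m) (ν₁ n) e'
    refine ⟨e'', ?_⟩
    intro k hk hσ
    exact hσ'' (ν₁ k) (h₁.simplicial m k hk).1 (hσ' k hk hσ)
  · intro n'' m h
    obtain ⟨k', hk'⟩ := h₂.alfred_surj n'' (ν₁ m) h
    have hedge'' : G''.edge (ν₂ k').1 (G''.parent (ν₂ (ν₁ m)).1) :=
      ((hG''.ab1 (ν₂ k').1 n''.1 (ν₂ k').2 hk' _).1).mpr h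
    obtain ⟨e', -⟩ := h₂.outcome_consistent k' (ν₁ m) hedge''
    obtain ⟨k, hk⟩ := h₁.alfred_surj k' m e'
    exact ⟨k, (h₂.info_pres (ν₁ k) k' hk).trans hk'⟩
end

section
/- The class of all alternating spacetime games, endowed with game morphisms, identity game morphisms, and componentwise composition of game morphisms, forms a category (denoted Game): identities are morphisms, composites of morphisms are morphisms, composition is associative, and the left and right unit laws hold. -/
open scoped Classical

/-- The class of all alternating spacetime games, endowed with
game morphisms, identity game morphisms and componentwise composition, forms a
category: identities are morphisms, composites of morphisms are morphisms,
composition is associative, and the left and right unit laws hold. -/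
theorem game_category :
    (∀ G : SpacetimeGame, IsAlternating G → IsGameHom G G (idν G) (idβ G)) ∧
    (∀ (G G' G'' : SpacetimeGame), IsAlternating G → IsAlternating G' →
      IsAlternating G'' →
      ∀ (ν₁ : G.NodeA → G'.NodeA) (β₁ : G.NodeA → G'.Action → G.Action)
        (ν₂ : G'.NodeA → G''.NodeA) (β₂ : G'.NodeA → G''.Action → G'.Action),
        IsGameHom G' G ν₁ β₁ → IsGameHom G'' G' ν₂ β₂ →
          IsGameHom G'' G (compν ν₁ ν₂) (compβ ν₁ β₁ β₂)) ∧
    (∀ (G G' G'' G''' : SpacetimeGame), IsAlternating G → IsAlternating G' →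
      IsAlternating G'' → IsAlternating G''' →
      ∀ (ν₁ : G.NodeA → G'.NodeA) (β₁ : G.NodeA → G'.Action → G.Action)
        (ν₂ : G'.NodeA → G''.NodeA) (β₂ : G'.NodeA → G''.Action → G'.Action)
        (ν₃ : G''.NodeA → G'''.NodeA) (β₃ : G''.NodeA → G'''.Action → G''.Action),
        IsGameHom G' G ν₁ β₁ → IsGameHom G'' G' ν₂ β₂ → IsGameHom G''' G'' ν₃ β₃ →
          compν ν₁ (compν ν₂ ν₃) = compν (compν ν₁ ν₂) ν₃ ∧
          compβ ν₁ β₁ (compβ ν₂ β₂ β₃) = compβ (compν ν₁ ν₂) (compβ ν₁ β₁ β₂) β₃) ∧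
    (∀ (G G' : SpacetimeGame), IsAlternating G → IsAlternating G' →
      ∀ (ν : G.NodeA → G'.NodeA) (β : G.NodeA → G'.Action → G.Action),
        IsGameHom G' G ν β →
          compν (idν G) ν = ν ∧ compβ (idν G) (idβ G) β = β ∧
          compν ν (idν G') = ν ∧ compβ ν β (idβ G') = β) := by
  refine ⟨?_, ?_, ?_, ?_⟩
  · -- identity
    intro G hG
    refine ⟨fun n m _ => rfl, fun n a ha => ha, fun n m h => h,
      fun n m h => h, fun n m h => ⟨h, rfl⟩,
      fun m n h => ⟨h, fun k _ hσ => hσ⟩,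
      fun n' m _ => ⟨n', rfl⟩⟩
  · -- composition
    intro G G' G'' hG hG' hG'' ν₁ β₁ ν₂ β₂ h₁ h₂
    refine ⟨?_, ?_, ?_, ?_, ?_, ?_, ?_⟩
    · intro n m h
      funext a
      simp only [compβ]
      rw [h₁.beta_const n m h, h₂.beta_const (ν₁ n) (ν₁ m) (h₁.info_pres n m h)]
    · intro n a ha
      exact h₁.beta_mapsTo n _ (h₂.beta_mapsTo (ν₁ n) a ha)
    · intro n m h
      exact h₂.info_pres (ν₁ n) (ν₁ m) (h₁.info_pres n m h)
    · intro n m h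
      exact h₁.parent_pres n m (h₂.parent_pres (ν₁ n) (ν₁ m) h)
    · intro n m h
      obtain ⟨he', hs'⟩ := h₂.outcome_consistent (ν₁ n) (ν₁ m) h
      obtain ⟨he, hs⟩ := h₁.outcome_consistent n m he'
      refine ⟨he, ?_⟩
      simp only [compβ, compν]
      rw [hs', hs]
    · intro m n h
      obtain ⟨he', hσ'⟩ := h₁.simplicial m n h
      obtain ⟨he'', hσ''⟩ := h₂.simplicial (ν₁ m) (ν₁ n) he'
      refine ⟨he'', fun k hk hσ => ?_⟩
      exact hσ'' (ν₁ k) (h₁.simplicial m k hk).1 (hσ' k hk hσ)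
    · intro n'' m h
      obtain ⟨k', hk'⟩ := h₂.alfred_surj n'' (ν₁ m) h
      -- ν₂ k' also has an edge into parent (ν₂ (ν₁ m)), by AB1 in G''
      have hedge'' : G''.edge (ν₂ k').1 (G''.parent (ν₂ (ν₁ m)).1) := by
        have := (hG''.ab1 n''.1 (ν₂ k').1 n''.2 hk'.symm
          (G''.parent (ν₂ (ν₁ m)).1)).1
        exact this.mp h
      have hedge' : G'.edge k'.1 (G'.parent (ν₁ m).1) :=
        (h₂.outcome_consistent k' (ν₁ m) hedge'').1
      obtain ⟨k, hk⟩ := h₁.alfred_surj k' m hedge'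
      exact ⟨k, by show G''.ι (ν₂ (ν₁ k)).1 = _; rw [h₂.info_pres (ν₁ k) k' hk, hk']⟩
  · -- associativity
    intro _ _ _ _ _ _ _ _ _ _ _ _ _ _ _ _ _
    exact ⟨rfl, rfl⟩
  · -- unit laws
    intro _ _ _ _ _ _ _
    exact ⟨rfl, rfl, rfl, rfl⟩
end

section
/- Given three causal contextuality scenarios Γ, Γ', Γ'' (each acyclic, with unique causal bridges and a causally secured cover) and scenario morphisms μ₁ : Γ' → Γ with components (π₁', α₁) and μ₂ : Γ'' → Γ' with components (π₂'', α₂'), the composite pair μ₁ ∘ μ₂ := (π₂'' ∘ π₁', {α₁,x ∘ α₂',π₁'(x)}_{x∈X}) satisfies all three structural constraints of a scenario morphism, i.e. μ₁ ∘ μ₂ : Γ'' → Γ is a scenario morphism. -/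
open scoped Classical

/-- The composite of two scenario morphisms between causal
contextuality scenarios (each acyclic, with unique causal bridges and a
causally secured cover) satisfies all three structural constraints of a
scenario morphism. -/
theorem comp_is_scenario_morphism (Γ Γ' Γ'' : ScenarioData)
    (hΓ : IsCCS Γ) (hΓ' : IsCCS Γ') (hΓ'' : IsCCS Γ'')
    (π₁ : Γ.X → Γ'.X) (α₁ : Γ.X → Γ'.Outcome → Γ.Outcome)
    (π₂ : Γ'.X → Γ''.X) (α₂ : Γ'.X → Γ''.Outcome → Γ'.Outcome)
    (h₁ : IsScenarioHom Γ' Γ π₁ α₁) (h₂ : IsScenarioHom Γ'' Γ' π₂ α₂) :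
    IsScenarioHom Γ'' Γ (compπ π₁ π₂) (compα π₁ α₁ α₂) := by
  constructor
  · intro x o ho
    exact h₁.alpha_mapsTo x _ (h₂.alpha_mapsTo (π₁ x) o ho)
  · intro C hC
    obtain ⟨C', hC', hsub⟩ := h₁.simplicial C hC
    obtain ⟨C'', hC'', hsub'⟩ := h₂.simplicial C' hC'
    refine ⟨C'', hC'', ?_⟩
    rintro _ ⟨x, hx, rfl⟩
    exact hsub' ⟨π₁ x, hsub ⟨x, hx, rfl⟩, rfl⟩
  · intro x y h
    exact h₁.bridge_pres x y (h₂.bridge_pres (π₁ x) (π₁ y) h)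
  · intro x y'' hne
    obtain ⟨y', hy'⟩ := h₂.support_surj (π₁ x) y'' hne
    rw [← hy'] at hne
    obtain ⟨o'', ho''⟩ := Option.ne_none_iff_exists'.mp hne
    have := h₂.outcome_consistent (π₁ x) y' o'' ho''
    obtain ⟨y, hy⟩ := h₁.support_surj x y' (by rw [this]; exact Option.some_ne_none _)
    exact ⟨y, by rw [compπ, hy, hy']⟩
  · intro x y o'' h
    have h' := h₂.outcome_consistent (π₁ x) (π₁ y) o'' h
    exact h₁.outcome_consistent x y _ h'
end

section
/- The class of all causal contextuality scenarios with no cycles, unique causal bridges, and a causally secured cover, endowed with scenario morphisms, identity scenario morphisms, and componentwise composition, forms a category (denoted Scenario): identities are morphisms, composites of morphisms are morphisms, composition is associative, and the left and right unit laws hold. -/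
open scoped Classical

/-- The class of all causal contextuality scenarios with no
cycles, unique causal bridges and a causally secured cover, endowed with
scenario morphisms, identity scenario morphisms and componentwise composition,
forms a category: identities are morphisms, composites of morphisms are
morphisms, composition is associative, and the left and right unit laws hold. -/
theorem scenario_category :
    (∀ Γ : ScenarioData, IsCCS Γ → IsScenarioHom Γ Γ (idπ Γ) (idα Γ)) ∧
    (∀ (Γ Γ' Γ'' : ScenarioData), IsCCS Γ → IsCCS Γ' → IsCCS Γ'' →
      ∀ (π₁ : Γ.X → Γ'.X) (α₁ : Γ.X → Γ'.Outcome → Γ.Outcome)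
        (π₂ : Γ'.X → Γ''.X) (α₂ : Γ'.X → Γ''.Outcome → Γ'.Outcome),
        IsScenarioHom Γ' Γ π₁ α₁ → IsScenarioHom Γ'' Γ' π₂ α₂ →
          IsScenarioHom Γ'' Γ (compπ π₁ π₂) (compα π₁ α₁ α₂)) ∧
    (∀ (Γ Γ' Γ'' Γ''' : ScenarioData), IsCCS Γ → IsCCS Γ' → IsCCS Γ'' →
      IsCCS Γ''' →
      ∀ (π₁ : Γ.X → Γ'.X) (α₁ : Γ.X → Γ'.Outcome → Γ.Outcome)
        (π₂ : Γ'.X → Γ''.X) (α₂ : Γ'.X → Γ''.Outcome → Γ'.Outcome)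
        (π₃ : Γ''.X → Γ'''.X) (α₃ : Γ''.X → Γ'''.Outcome → Γ''.Outcome),
        IsScenarioHom Γ' Γ π₁ α₁ → IsScenarioHom Γ'' Γ' π₂ α₂ →
        IsScenarioHom Γ''' Γ'' π₃ α₃ →
          compπ π₁ (compπ π₂ π₃) = compπ (compπ π₁ π₂) π₃ ∧
          compα π₁ α₁ (compα π₂ α₂ α₃) = compα (compπ π₁ π₂) (compα π₁ α₁ α₂) α₃) ∧
    (∀ (Γ Γ' : ScenarioData), IsCCS Γ → IsCCS Γ' →
      ∀ (π : Γ.X → Γ'.X) (α : Γ.X → Γ'.Outcome → Γ.Outcome),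
        IsScenarioHom Γ' Γ π α →
          compπ (idπ Γ) π = π ∧ compα (idπ Γ) (idα Γ) α = α ∧
          compπ π (idπ Γ') = π ∧ compα π α (idα Γ') = α) := by
  refine ⟨?_, ?_, ?_, ?_⟩
  · intro Γ _
    refine ⟨fun x o h => h, fun C hC => ⟨C, hC, by simp [idπ]⟩,
      fun x y h => h, fun x y' h => ⟨y', rfl⟩, fun x y o' h => h⟩
  · intro Γ Γ' Γ'' _ _ _ π₁ α₁ π₂ α₂ h₁ h₂
    refine ⟨?_, ?_, ?_, ?_, ?_⟩
    · intro x o ho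
      exact h₁.alpha_mapsTo x _ (h₂.alpha_mapsTo (π₁ x) o ho)
    · intro C hC
      obtain ⟨C', hC', hsub⟩ := h₁.simplicial C hC
      obtain ⟨C'', hC'', hsub'⟩ := h₂.simplicial C' hC'
      refine ⟨C'', hC'', ?_⟩
      rintro _ ⟨x, hx, rfl⟩
      exact hsub' ⟨π₁ x, hsub ⟨x, hx, rfl⟩, rfl⟩
    · intro x y h
      exact h₁.bridge_pres x y (h₂.bridge_pres (π₁ x) (π₁ y) h)
    · intro x y'' h
      obtain ⟨y', hy'⟩ := h₂.support_surj (π₁ x) y'' h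
      obtain ⟨o'', ho''⟩ := Option.ne_none_iff_exists'.mp h
      have := h₂.outcome_consistent (π₁ x) y' o'' (by rw [hy']; exact ho'')
      obtain ⟨y, hy⟩ := h₁.support_surj x y' (by rw [this]; simp)
      exact ⟨y, by rw [compπ, hy, hy']⟩
    · intro x y o'' h
      have h' := h₂.outcome_consistent (π₁ x) (π₁ y) o'' h
      exact h₁.outcome_consistent x y _ h'
  · intros
    exact ⟨rfl, rfl⟩
  · intros
    exact ⟨rfl, rfl, rfl, rfl⟩
end

section
/- For any alternating spacetime game G, the map t ↦ t̂ sending each Bob node t to the event set t̂ = {(ι(m), σ(m, t)) | m ∈ N_A, m ⌣ t} is a bijection between the set of Bob's nodes of G and the set of left-hand sides of the enabling relations of the associated scenario F(G). -/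
open scoped Classical

/-!
Two Bob nodes are told apart by their causal bridges: by AB1 the label that `t̂` gives an
Alfred information set is the label of the edge from any of its nodes into `t`, so `t̂`
determines the parents of `t` and the labels of their edges, and AB2 concludes. Every Bob
node has a child (EVEN), which makes `t̂` an enabling event set; conversely an enabling event
set is either `t̂` for a parent `t` of an Alfred node, necessarily a Bob node by BIPARTITE,
or the empty set of a parentless Alfred node, which EVEN rules out.
-/

namespace IsAlternating

variable {G : SpacetimeGame} (hG : IsAlternating G)
include hG

theorem isAlfred_iff_not_isBob {n : G.Node} : G.isAlfred n ↔ ¬ G.isBob n :=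
  ⟨fun ha hb => hG.players_ne (hb.symm.trans ha),
    fun hb => (hG.two_players (G.ι n)).resolve_left hb⟩

theorem isBob_iff_isAlfred_of_edge {m n : G.Node} (hedge : G.edge m n) :
    G.isBob m ↔ G.isAlfred n := by
  have hne := hG.bipartite m n hedge
  rw [hG.isAlfred_iff_not_isBob, SpacetimeGame.isBob, SpacetimeGame.isBob]
  exact ⟨fun hm hn => hne (hm.trans hn.symm), fun hn => (hG.two_players _).resolve_right
    fun hm => hne (hm.trans ((hG.two_players _).resolve_left hn).symm)⟩

theorem isAlfred_iff_isBob_of_edge {m n : G.Node} (hedge : G.edge m n) :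
    G.isAlfred m ↔ G.isBob n := by
  rw [hG.isAlfred_iff_not_isBob, ← not_iff_not, not_not, ← hG.isAlfred_iff_not_isBob]
  exact hG.isBob_iff_isAlfred_of_edge hedge

theorem exists_edge_of_isBob {t : G.Node} (hb : G.isBob t) : ∃ n, G.edge t n := by
  by_contra! hleaf
  exact hG.isAlfred_iff_not_isBob.1 (hG.even_leaves t hleaf) hb

theorem tHat_apply_of_edge {n t : G.Node} (ha : G.isAlfred n) (hedge : G.edge n t) :
    G.tHat t ⟨G.ι n, n, rfl, ha⟩ = some (G.σ n t) := by
  have hex : ∃ m, G.ι m = G.ι n ∧ G.edge m t := ⟨n, rfl, hedge⟩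
  have hι : G.ι hex.choose = G.ι n := hex.choose_spec.1
  dsimp only [SpacetimeGame.tHat]
  rw [dif_pos hex, ((hG.ab1 n _ ha hι.symm) t).2 hedge]

theorem edge_of_tHat_apply_ne_none {n t : G.Node} (ha : G.isAlfred n)
    (h : G.tHat t ⟨G.ι n, n, rfl, ha⟩ ≠ none) : G.edge n t := by
  dsimp only [SpacetimeGame.tHat] at h
  obtain ⟨m, hι, hm⟩ : ∃ m, G.ι m = G.ι n ∧ G.edge m t := not_not.1 fun hno => h (dif_neg hno)
  exact ((hG.ab1 n m ha hι.symm) t).1.2 hm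

theorem edge_and_σ_eq_of_tHat_eq {t u n : G.Node} (hb : G.isBob t)
    (h : G.tHat t = G.tHat u) (hedge : G.edge n t) : G.edge n u ∧ G.σ n t = G.σ n u := by
  have ha := (hG.isAlfred_iff_isBob_of_edge hedge).2 hb
  have hu := congrFun h ⟨G.ι n, n, rfl, ha⟩
  rw [hG.tHat_apply_of_edge ha hedge] at hu
  have hnu := hG.edge_of_tHat_apply_ne_none ha (hu ▸ Option.some_ne_none _)
  rw [hG.tHat_apply_of_edge ha hnu, Option.some_inj] at hu
  exact ⟨hnu, hu⟩

theorem injOn_tHat : Set.InjOn G.tHat {t | G.isBob t} := fun t ht u hu h =>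
  hG.ab2 t u ht hu
    (fun _ => ⟨fun hn => (hG.edge_and_σ_eq_of_tHat_eq ht h hn).1,
      fun hn => (hG.edge_and_σ_eq_of_tHat_eq hu h.symm hn).1⟩)
    (fun _ hn => (hG.edge_and_σ_eq_of_tHat_eq ht h hn).2)

end IsAlternating

/-- For any alternating spacetime game `G`, the map `t ↦ t̂`
sending each Bob node to its causal bridge is a bijection between Bob's nodes
of `G` and the left-hand sides of the enabling relations of the associated
scenario `F(G)`. -/
theorem tHat_bijection (G : SpacetimeGame) (hG : IsAlternating G) :
    Set.BijOn G.tHat {t : G.Node | G.isBob t}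
      {t : (Fobj G).X → Option (Fobj G).Outcome | ∃ x, (Fobj G).Enables t x} := by
  refine ⟨fun t ht => ?_, hG.injOn_tHat, fun t ⟨x, n, hn, hlhs⟩ => ?_⟩
  · obtain ⟨n, hedge⟩ := hG.exists_edge_of_isBob ht
    exact ⟨⟨G.ι n, n, rfl, (hG.isBob_iff_isAlfred_of_edge hedge).1 ht⟩, n, rfl,
      Or.inl ⟨t, hedge, rfl⟩⟩
  · have ha : G.isAlfred n := by
      obtain ⟨_, _, hx⟩ := x.2
      rwa [SpacetimeGame.isAlfred, hn]
    rcases hlhs with ⟨t₀, hedge, rfl⟩ | ⟨hroot, -⟩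
    · exact ⟨t₀, (hG.isBob_iff_isAlfred_of_edge hedge).2 ha, rfl⟩
    · exact absurd (hG.even_roots n hroot) (hG.isAlfred_iff_not_isBob.1 ha)
end
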